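/- Let C be a closed subset of the rotation poset and S = {s} ∪ {v_i : ρ_i ∈ C} the corresponding ideal cut in the augmented DAG G. For any boy-girl pair bg not in every stable matching, the cut S cuts the associated path P_{bg} (i.e., some edge of P_{bg} crosses from S to its complement) if and only if the stable matching generated by C contains the pair bg. -/

import Mathlib

/-- `rB b g` is the rank boy `b` gives girl `g` (smaller = more preferred), and
`rG g b` the rank girl `g` gives boy `b`.  A matching (bijection) `M` is stable if
no pair `(b, g)` prefer each other to their partners. -/
def StableM {B G : Type*} (rB : B → G → ℕ) (rG : G → B → ℕ) (M : B ≃ G) : Prop :=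
  ∀ (b : B) (g : G), ¬ (rB b g < rB b (M b) ∧ rG g b < rG g (M.symm g))

/-- The total weight of a matching. -/
def matchWeight {B G : Type*} [Fintype B] (w : B → G → ℚ) (M : B ≃ G) : ℚ :=
  ∑ b, w b (M b)

/-- A maximum weight stable matching. -/
def MaxWtStable {B G : Type*} [Fintype B] (rB : B → G → ℕ) (rG : G → B → ℕ)
    (w : B → G → ℚ) (M : B ≃ G) : Prop :=
  StableM rB rG M ∧ ∀ N : B ≃ G, StableM rB rG N → matchWeight w N ≤ matchWeight w M

/-- A rotation: a cyclic sequence of `r ≥ 2` distinct pairs `(b_i, g_i)`.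
Indices live in `ZMod r` so that `i + 1` wraps around. -/
structure Rotation (B G : Type*) where
  r : ℕ
  two_le : 2 ≤ r
  bs : ZMod r → B
  gs : ZMod r → G
  inj_bs : Function.Injective bs
  inj_gs : Function.Injective gs

/-- `ρ` is exposed in `M`: each `b_i` is matched to `g_i`, and `g_{i+1} = s_M(b_i)` is
the first girl on `b_i`'s list preferring `b_i` to her `M`-partner. -/
def Exposed {B G : Type*} (rB : B → G → ℕ) (rG : G → B → ℕ) (M : B ≃ G)
    (ρ : Rotation B G) : Prop :=
  (∀ i, M (ρ.bs i) = ρ.gs i) ∧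
    (∀ i, rG (ρ.gs (i + 1)) (ρ.bs i) < rG (ρ.gs (i + 1)) (M.symm (ρ.gs (i + 1)))) ∧
    (∀ i, ∀ g : G, rB (ρ.bs i) g < rB (ρ.bs i) (ρ.gs (i + 1)) →
      ¬ (rG g (ρ.bs i) < rG g (M.symm g)))

/-- `M'` results from `M` by eliminating the rotation `ρ` (exposed in `M`):
each `b_i` moves from `g_i` to `g_{i+1}`, everyone else keeps their partner. -/
def Eliminates {B G : Type*} (rB : B → G → ℕ) (rG : G → B → ℕ)
    (M : B ≃ G) (ρ : Rotation B G) (M' : B ≃ G) : Prop :=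
  Exposed rB rG M ρ ∧ (∀ i, M' (ρ.bs i) = ρ.gs (i + 1)) ∧
    ∀ b : B, (∀ i, b ≠ ρ.bs i) → M' b = M b

/-- `ElimChain rB rG M L M'`: the list `L` of rotations can be eliminated one after
another starting from `M` and ending at `M'`. -/
def ElimChain {B G : Type*} (rB : B → G → ℕ) (rG : G → B → ℕ) :
    (B ≃ G) → List (Rotation B G) → (B ≃ G) → Prop
  | M, [], M' => M = M'
  | M, ρ :: L, M' => ∃ N : B ≃ G, Eliminates rB rG M ρ N ∧ ElimChain rB rG N L M'

/-- The boy-optimal stable matching. -/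
def BoyOptimal {B G : Type*} (rB : B → G → ℕ) (rG : G → B → ℕ) (M₀ : B ≃ G) : Prop :=
  StableM rB rG M₀ ∧ ∀ M : B ≃ G, StableM rB rG M → ∀ b, rB b (M₀ b) ≤ rB b (M b)

/-- The girl-optimal stable matching. -/
def GirlOptimal {B G : Type*} (rB : B → G → ℕ) (rG : G → B → ℕ) (Mz : B ≃ G) : Prop :=
  StableM rB rG Mz ∧ ∀ M : B ≃ G, StableM rB rG M → ∀ g, rG g (Mz.symm g) ≤ rG g (M.symm g)

/-- `ρ` is a rotation of the instance: it is exposed in some stable matching. -/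
def IsRotation {B G : Type*} (rB : B → G → ℕ) (rG : G → B → ℕ) (ρ : Rotation B G) : Prop :=
  ∃ M : B ≃ G, StableM rB rG M ∧ Exposed rB rG M ρ

/-- The set of pairs of a rotation (rotations are identified up to cyclic shift by
having equal pair sets). -/
def rotPairs {B G : Type*} (ρ : Rotation B G) : Set (B × G) :=
  {p | ∃ i, p = (ρ.bs i, ρ.gs i)}

/-- `ρ` moves `b` to `g`: after eliminating `ρ`, `b` is matched to `g`. -/
def MovesTo {B G : Type*} (ρ : Rotation B G) (b : B) (g : G) : Prop :=
  ∃ i, ρ.bs i = b ∧ ρ.gs (i + 1) = g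

/-- `ρ` moves `b` from `g`: before eliminating `ρ`, `b` is matched to `g`. -/
def MovesFrom {B G : Type*} (ρ : Rotation B G) (b : B) (g : G) : Prop :=
  ∃ i, ρ.bs i = b ∧ ρ.gs i = g

/-- `ρ'` precedes `ρ` in the rotation poset: `ρ'` is eliminated (up to cyclic shift)
in every sequence of eliminations from the boy-optimal matching `M₀` to a stable
matching in which `ρ` is exposed. -/
def Precedes {B G : Type*} (rB : B → G → ℕ) (rG : G → B → ℕ)
    (ρ' ρ : Rotation B G) : Prop :=
  ∀ (M₀ : B ≃ G) (L : List (Rotation B G)) (M : B ≃ G),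
    BoyOptimal rB rG M₀ → ElimChain rB rG M₀ L M → Exposed rB rG M ρ →
      ∃ ρ'' ∈ L, rotPairs ρ'' = rotPairs ρ'

/-- Vertices of the DAG `G` built from the rotation poset: a source, a sink, and one
vertex per rotation (indexed by `ι`). -/
inductive Vtx (ι : Type*) where
  | src : Vtx ι
  | snk : Vtx ι
  | node : ι → Vtx ι
deriving DecidableEq

instance {ι : Type*} [Fintype ι] [DecidableEq ι] : Fintype (Vtx ι) :=
  Fintype.ofSurjective
    (fun x : Option (Option ι) =>
      match x with
      | none => Vtx.src
      | some none => Vtx.snk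
      | some (some i) => Vtx.node i)
    (by rintro (_ | _ | i) <;> [exact ⟨none, rfl⟩; exact ⟨some none, rfl⟩;
          exact ⟨some (some i), rfl⟩])

/-- `M` is the stable matching generated by the (closed) set `C` of rotation indices:
it is obtained from `M₀` by eliminating the rotations of `C` in some (topological)
order. -/
def GeneratedBy {B G ι : Type*} (rB : B → G → ℕ) (rG : G → B → ℕ) (M₀ : B ≃ G)
    (rot : ι → Rotation B G) (C : Set ι) (M : B ≃ G) : Prop :=
  ∃ L : List ι, (∀ i, i ∈ L ↔ i ∈ C) ∧ ElimChain rB rG M₀ (L.map rot) M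

/-- The defining conditions on the path `P_{bg}` associated to a pair `bg` occurring in
some but not all stable matchings (`M₀` boy-optimal, `Mz` girl-optimal):
from the source to the rotation moving `b` from `g`, or from the rotation moving `b`
to `g` to the sink, or between the two rotations, according to whether `bg ∈ M₀`
and/or `bg ∈ Mz`. -/
def PathSpec {B G ι : Type*} (M₀ Mz : B ≃ G) (rot : ι → Rotation B G)
    (b : B) (g : G) (P : List (Vtx ι)) : Prop :=
  (M₀ b = g ∧ Mz b ≠ g ∧ ∃ i, MovesFrom (rot i) b g ∧
      P.head? = some Vtx.src ∧ P.getLast? = some (Vtx.node i)) ∨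
  (M₀ b ≠ g ∧ Mz b = g ∧ ∃ i, MovesTo (rot i) b g ∧
      P.head? = some (Vtx.node i) ∧ P.getLast? = some Vtx.snk) ∨
  (M₀ b ≠ g ∧ Mz b ≠ g ∧ ∃ i j, MovesTo (rot i) b g ∧ MovesFrom (rot j) b g ∧
      P.head? = some (Vtx.node i) ∧ P.getLast? = some (Vtx.node j))

/-- The cut with source side `S` cuts the path `P`: some edge of `P` crosses from `S`
to its complement. -/
def CutsPath {W : Type*} (S : Set W) (P : List W) : Prop :=
  ∃ q ∈ P.zip P.tail, q.1 ∈ S ∧ q.2 ∉ S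


/-!
Along an edge of `G` membership in the ideal cut can only be lost, so the cut crosses a path
exactly when the path starts inside it and ends outside. The claim then becomes: `MC b = g`
iff the rotation moving `b` to `g` (if any) lies in `C` and the rotation moving `b` from `g`
(if any) does not. This holds because eliminating a rotation strictly worsens each of its boys,
because no rotation moves a boy away from his girl-optimal partner, and because a pair is moved
from (or to) by only one rotation up to cyclic shift. The last fact holds since no stable partner
of `b_i` lies strictly between `g_i` and `g_{i+1}` on his list (and dually for girls), which
comes from a counting argument between two stable matchings (`StableM.rB_lt_of_rG_lt`).
-/

section RotationTheory

variable {B G : Type*} {rB : B → G → ℕ} {rG : G → B → ℕ}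

namespace StableM

variable {M Q : B ≃ G}

theorem rB_le_of_rG_lt (hM : StableM rB rG M) {b : B} {g : G}
    (h : rG g b < rG g (M.symm g)) : rB b (M b) ≤ rB b g :=
  not_lt.1 fun h' => hM b g ⟨h', h⟩

theorem rG_le_of_rB_lt (hM : StableM rB rG M) {b : B} {g : G}
    (h : rB b g < rB b (M b)) : rG g (M.symm g) ≤ rG g b :=
  not_lt.1 fun h' => hM b g ⟨h, h'⟩

/- `Q` maps the boys preferring `Q` to `M` into the girls preferring `M` to `Q`, and `M⁻¹` maps
them back; by finiteness `Q` is onto. -/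
theorem rB_lt_of_rG_lt [Finite B] (hrB : ∀ b, Function.Injective (rB b))
    (hrG : ∀ g, Function.Injective (rG g)) (hM : StableM rB rG M) (hQ : StableM rB rG Q)
    {g : G} (h : rG g (M.symm g) < rG g (Q.symm g)) :
    rB (Q.symm g) g < rB (Q.symm g) (M (Q.symm g)) := by
  have : Finite G := .of_equiv B M
  let X : Set B := {b | rB b (Q b) < rB b (M b)}
  let Y : Set G := {g | rG g (M.symm g) < rG g (Q.symm g)}
  have hXY : Q '' X ⊆ Y := by
    rintro _ ⟨b, hb, rfl⟩
    have hne : M.symm (Q b) ≠ b := fun e => hb.ne (congrArg (rB b) (M.symm_apply_eq.1 e))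
    show rG (Q b) (M.symm (Q b)) < rG (Q b) (Q.symm (Q b))
    rw [Q.symm_apply_apply]
    exact (hM.rG_le_of_rB_lt hb).lt_of_ne fun e => hne (hrG _ e)
  have hYX : ∀ g ∈ Y, M.symm g ∈ X := by
    intro g hg
    have hne : Q (M.symm g) ≠ g := fun e => hg.ne (congrArg (rG g) (Q.eq_symm_apply.2 e))
    show rB (M.symm g) (Q (M.symm g)) < rB (M.symm g) (M (M.symm g))
    rw [M.apply_symm_apply]
    exact (hQ.rB_le_of_rG_lt hg).lt_of_ne fun e => hne (hrB _ e)
  have hQXY : Q '' X = Y := Set.eq_of_subset_of_ncard_le hXY (by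
    rw [Set.ncard_image_of_injective _ Q.injective]
    exact Set.ncard_le_ncard_of_injOn _ hYX M.symm.injective.injOn)
  obtain ⟨b, hb, rfl⟩ : g ∈ Q '' X := hQXY ▸ h
  rw [Q.symm_apply_apply]
  exact hb

end StableM

namespace Exposed

variable {M : B ≃ G} {ρ : Rotation B G}

theorem symm_gs (hE : Exposed rB rG M ρ) (m : ZMod ρ.r) : M.symm (ρ.gs m) = ρ.bs m :=
  M.symm_apply_eq.2 (hE.1 m).symm

theorem rB_gs_lt_gs_succ (hrB : ∀ b, Function.Injective (rB b)) (hM : StableM rB rG M)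
    (hE : Exposed rB rG M ρ) (m : ZMod ρ.r) :
    rB (ρ.bs m) (ρ.gs m) < rB (ρ.bs m) (ρ.gs (m + 1)) := by
  have hle : rB (ρ.bs m) (ρ.gs m) ≤ rB (ρ.bs m) (ρ.gs (m + 1)) := by
    simpa only [hE.1 m] using hM.rB_le_of_rG_lt (hE.2.1 m)
  refine hle.lt_of_ne fun e => ?_
  have h := hE.2.1 m
  rw [← hrB _ e, hE.symm_gs] at h
  exact lt_irrefl _ h

theorem exists_eliminates (hE : Exposed rB rG M ρ) : ∃ M', Eliminates rB rG M ρ M' := by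
  classical
  let e := Equiv.ofInjective ρ.bs ρ.inj_bs
  let π : Equiv.Perm B := (Equiv.addRight (1 : ZMod ρ.r)).extendDomain e
  refine ⟨π.trans M, hE, fun m => ?_, fun b hb => ?_⟩
  · have hπ : π (ρ.bs m) = ρ.bs (m + 1) := by
      simpa [e] using Equiv.Perm.extendDomain_apply_image (Equiv.addRight (1 : ZMod ρ.r)) e m
    rw [Equiv.trans_apply, hπ, hE.1]
  · have hπ : π b = b := Equiv.Perm.extendDomain_apply_not_subtype _ e
      (by rintro ⟨m, rfl⟩; exact hb m rfl)
    rw [Equiv.trans_apply, hπ]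

end Exposed

namespace Eliminates

variable {M M' : B ≃ G} {ρ : Rotation B G}

theorem symm_gs (hel : Eliminates rB rG M ρ M') (m : ZMod ρ.r) :
    M'.symm (ρ.gs m) = ρ.bs (m - 1) :=
  M'.symm_apply_eq.2 (by rw [hel.2.1, sub_add_cancel])

theorem symm_of_forall_ne (hel : Eliminates rB rG M ρ M') {g : G} (hg : ∀ m, g ≠ ρ.gs m) :
    M'.symm g = M.symm g := by
  have hb : ∀ m, M.symm g ≠ ρ.bs m := fun m e => hg m (by rw [← hel.1.1 m, ← e, M.apply_symm_apply])
  rw [Equiv.symm_apply_eq, hel.2.2 _ hb, M.apply_symm_apply]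

theorem rG_symm_le (hel : Eliminates rB rG M ρ M') (g : G) :
    rG g (M'.symm g) ≤ rG g (M.symm g) := by
  by_cases hg : ∃ m, g = ρ.gs m
  · obtain ⟨m, rfl⟩ := hg
    have h := hel.1.2.1 (m - 1)
    rw [sub_add_cancel] at h
    rw [hel.symm_gs]
    exact h.le
  · push Not at hg
    rw [hel.symm_of_forall_ne hg]

theorem not_blocking (hM : StableM rB rG M) (hel : Eliminates rB rG M ρ M') {b : B} {g : G} :
    ¬ (rB b g < rB b (M' b) ∧ rG g b < rG g (M.symm g)) := by
  rintro ⟨hb, hg⟩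
  by_cases hρ : ∃ m, b = ρ.bs m
  · obtain ⟨m, rfl⟩ := hρ
    rw [hel.2.1 m] at hb
    exact hel.1.2.2 m g hb hg
  · push Not at hρ
    rw [hel.2.2 b hρ] at hb
    exact hM b g ⟨hb, hg⟩

theorem stableM (hM : StableM rB rG M) (hel : Eliminates rB rG M ρ M') : StableM rB rG M' :=
  fun _ g ⟨hb, hg⟩ => hel.not_blocking hM ⟨hb, hg.trans_le (hel.rG_symm_le g)⟩

theorem rB_le (hrB : ∀ b, Function.Injective (rB b)) (hM : StableM rB rG M)
    (hel : Eliminates rB rG M ρ M') (b : B) : rB b (M b) ≤ rB b (M' b) := by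
  by_cases hρ : ∃ m, b = ρ.bs m
  · obtain ⟨m, rfl⟩ := hρ
    rw [hel.1.1 m, hel.2.1 m]
    exact (hel.1.rB_gs_lt_gs_succ hrB hM m).le
  · push Not at hρ
    rw [hel.2.2 b hρ]

theorem rB_lt_of_movesFrom (hrB : ∀ b, Function.Injective (rB b)) (hM : StableM rB rG M)
    (hel : Eliminates rB rG M ρ M') {b : B} {g : G} (h : MovesFrom ρ b g) :
    rB b g < rB b (M' b) := by
  obtain ⟨m, rfl, rfl⟩ := h
  rw [hel.2.1 m]
  exact hel.1.rB_gs_lt_gs_succ hrB hM m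

theorem apply_of_movesTo (hel : Eliminates rB rG M ρ M') {b : B} {g : G} (h : MovesTo ρ b g) :
    M' b = g := by
  obtain ⟨m, rfl, rfl⟩ := h
  exact hel.2.1 m

theorem movesFrom_of_apply_ne (hel : Eliminates rB rG M ρ M') {b : B} {g : G} (hM : M b = g)
    (hM' : M' b ≠ g) : MovesFrom ρ b g := by
  by_contra hρ
  refine hM' (hM ▸ hel.2.2 b fun m e => hρ ⟨m, e.symm, ?_⟩)
  rw [← hM, e, hel.1.1 m]

theorem movesTo_of_apply_ne (hel : Eliminates rB rG M ρ M') {b : B} {g : G} (hM : M b ≠ g)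
    (hM' : M' b = g) : MovesTo ρ b g := by
  by_contra hρ
  refine hM (hM' ▸ (hel.2.2 b fun m e => hρ ⟨m, e.symm, ?_⟩).symm)
  rw [← hM', e, hel.2.1 m]

end Eliminates

namespace Exposed

variable [Finite B] {M Q : B ≃ G} {ρ : Rotation B G}

theorem not_between_boy (hrB : ∀ b, Function.Injective (rB b))
    (hrG : ∀ g, Function.Injective (rG g)) (hM : StableM rB rG M) (hE : Exposed rB rG M ρ)
    (hQ : StableM rB rG Q) (m : ZMod ρ.r) :
    ¬ (rB (ρ.bs m) (ρ.gs m) < rB (ρ.bs m) (Q (ρ.bs m)) ∧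
      rB (ρ.bs m) (Q (ρ.bs m)) < rB (ρ.bs m) (ρ.gs (m + 1))) := by
  rintro ⟨h₁, h₂⟩
  have hne : M.symm (Q (ρ.bs m)) ≠ ρ.bs m := fun e =>
    h₁.ne' (by rw [M.symm_apply_eq.1 e, hE.1 m])
  have hlt : rG (Q (ρ.bs m)) (M.symm (Q (ρ.bs m))) < rG (Q (ρ.bs m)) (Q.symm (Q (ρ.bs m))) := by
    rw [Q.symm_apply_apply]
    exact (not_lt.1 (hE.2.2 m _ h₂)).lt_of_ne fun e => hne (hrG _ e)
  have h₃ := hM.rB_lt_of_rG_lt hrB hrG hQ hlt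
  rw [Q.symm_apply_apply, hE.1 m] at h₃
  exact lt_asymm h₁ h₃

theorem not_between_girl (hrB : ∀ b, Function.Injective (rB b))
    (hrG : ∀ g, Function.Injective (rG g)) (hM : StableM rB rG M) (hE : Exposed rB rG M ρ)
    (hQ : StableM rB rG Q) (m : ZMod ρ.r) :
    ¬ (rG (ρ.gs (m + 1)) (ρ.bs m) < rG (ρ.gs (m + 1)) (Q.symm (ρ.gs (m + 1))) ∧
      rG (ρ.gs (m + 1)) (Q.symm (ρ.gs (m + 1))) < rG (ρ.gs (m + 1)) (ρ.bs (m + 1))) := by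
  rintro ⟨h₁, h₂⟩
  obtain ⟨M', hel⟩ := hE.exists_eliminates
  have hM' : M'.symm (ρ.gs (m + 1)) = ρ.bs m := by rw [hel.symm_gs, add_sub_cancel_right]
  refine hel.not_blocking hM ⟨(hel.stableM hM).rB_lt_of_rG_lt hrB hrG hQ (hM' ▸ h₁), ?_⟩
  rwa [hE.symm_gs]

end Exposed

section RotationUniqueness

variable [Finite B] {M N : B ≃ G} {ρ ρ' : Rotation B G} {i : ZMod ρ.r} {j : ZMod ρ'.r}

theorem rB_gs_succ_le_of_pair_eq (hrB : ∀ b, Function.Injective (rB b))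
    (hrG : ∀ g, Function.Injective (rG g)) (hM : StableM rB rG M) (hEM : Exposed rB rG M ρ)
    (hN : StableM rB rG N) (hEN : Exposed rB rG N ρ')
    (hb : ρ.bs i = ρ'.bs j) (hg : ρ.gs i = ρ'.gs j) :
    rB (ρ.bs i) (ρ.gs (i + 1)) ≤ rB (ρ.bs i) (ρ'.gs (j + 1)) := by
  obtain ⟨N', hel⟩ := hEN.exists_eliminates
  have hN' : N' (ρ.bs i) = ρ'.gs (j + 1) := hb ▸ hel.2.1 j
  refine not_lt.1 fun h => hEM.not_between_boy hrB hrG hM (hel.stableM hN) i ⟨?_, hN' ▸ h⟩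
  rw [hN', hg, hb]
  exact hEN.rB_gs_lt_gs_succ hrB hN j

theorem rG_bs_succ_le_of_pair_eq (hrB : ∀ b, Function.Injective (rB b))
    (hrG : ∀ g, Function.Injective (rG g)) (hM : StableM rB rG M) (hEM : Exposed rB rG M ρ)
    (hN : StableM rB rG N) (hEN : Exposed rB rG N ρ')
    (hb : ρ.bs i = ρ'.bs j) (hg : ρ.gs (i + 1) = ρ'.gs (j + 1)) :
    rG (ρ.gs (i + 1)) (ρ.bs (i + 1)) ≤ rG (ρ.gs (i + 1)) (ρ'.bs (j + 1)) := by
  have hN' : N.symm (ρ.gs (i + 1)) = ρ'.bs (j + 1) := hg ▸ hEN.symm_gs (j + 1)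
  refine not_lt.1 fun h => hEM.not_between_girl hrB hrG hM hN i ⟨?_, hN' ▸ h⟩
  have h₁ := hEN.2.1 j
  rwa [← hg, ← hb] at h₁

theorem pair_succ_eq_of_pair_eq (hrB : ∀ b, Function.Injective (rB b))
    (hrG : ∀ g, Function.Injective (rG g)) (hM : StableM rB rG M) (hEM : Exposed rB rG M ρ)
    (hN : StableM rB rG N) (hEN : Exposed rB rG N ρ')
    (hb : ρ.bs i = ρ'.bs j) (hg : ρ.gs i = ρ'.gs j) :
    ρ.bs (i + 1) = ρ'.bs (j + 1) ∧ ρ.gs (i + 1) = ρ'.gs (j + 1) := by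
  have hg' : ρ.gs (i + 1) = ρ'.gs (j + 1) := hrB _ <| le_antisymm
    (rB_gs_succ_le_of_pair_eq hrB hrG hM hEM hN hEN hb hg)
    (by rw [hb]; exact rB_gs_succ_le_of_pair_eq hrB hrG hN hEN hM hEM hb.symm hg.symm)
  refine ⟨hrG _ (le_antisymm (rG_bs_succ_le_of_pair_eq hrB hrG hM hEM hN hEN hb hg') ?_), hg'⟩
  rw [hg']
  exact rG_bs_succ_le_of_pair_eq hrB hrG hN hEN hM hEM hb.symm hg'.symm

theorem rotPairs_subset_of_pair_eq (hrB : ∀ b, Function.Injective (rB b))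
    (hrG : ∀ g, Function.Injective (rG g)) (hM : StableM rB rG M) (hEM : Exposed rB rG M ρ)
    (hN : StableM rB rG N) (hEN : Exposed rB rG N ρ')
    (hb : ρ.bs i = ρ'.bs j) (hg : ρ.gs i = ρ'.gs j) : rotPairs ρ ⊆ rotPairs ρ' := by
  have hk : ∀ k : ℕ, ρ.bs (i + k) = ρ'.bs (j + k) ∧ ρ.gs (i + k) = ρ'.gs (j + k) := by
    intro k
    induction k with
    | zero => simpa using ⟨hb, hg⟩
    | succ k ih =>
      push_cast
      rw [← add_assoc, ← add_assoc]
      exact pair_succ_eq_of_pair_eq hrB hrG hM hEM hN hEN ih.1 ih.2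
  have : NeZero ρ.r := ⟨by have := ρ.two_le; omega⟩
  rintro _ ⟨m, rfl⟩
  obtain ⟨k, hmk⟩ := ZMod.natCast_zmod_surjective (m - i)
  refine ⟨j + k, ?_⟩
  rw [← (hk k).1, ← (hk k).2, hmk, add_sub_cancel]

theorem rB_gs_le_of_gs_succ_eq (hrB : ∀ b, Function.Injective (rB b))
    (hrG : ∀ g, Function.Injective (rG g)) (hM : StableM rB rG M) (hEM : Exposed rB rG M ρ)
    (hN : StableM rB rG N) (hEN : Exposed rB rG N ρ')
    (hb : ρ.bs i = ρ'.bs j) (hg : ρ.gs (i + 1) = ρ'.gs (j + 1)) :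
    rB (ρ.bs i) (ρ'.gs j) ≤ rB (ρ.bs i) (ρ.gs i) := by
  have hN' : N (ρ.bs i) = ρ'.gs j := hb ▸ hEN.1 j
  refine not_lt.1 fun h => hEM.not_between_boy hrB hrG hM hN i ⟨hN' ▸ h, ?_⟩
  rw [hN', hg, hb]
  exact hEN.rB_gs_lt_gs_succ hrB hN j

namespace IsRotation

theorem rotPairs_eq_of_movesFrom (hrB : ∀ b, Function.Injective (rB b))
    (hrG : ∀ g, Function.Injective (rG g)) (hρ : IsRotation rB rG ρ)
    (hρ' : IsRotation rB rG ρ') {b : B} {g : G} (h : MovesFrom ρ b g) (h' : MovesFrom ρ' b g) :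
    rotPairs ρ = rotPairs ρ' := by
  obtain ⟨M, hM, hEM⟩ := hρ
  obtain ⟨N, hN, hEN⟩ := hρ'
  obtain ⟨i, rfl, rfl⟩ := h
  obtain ⟨j, hb, hg⟩ := h'
  exact (rotPairs_subset_of_pair_eq hrB hrG hM hEM hN hEN hb.symm hg.symm).antisymm
    (rotPairs_subset_of_pair_eq hrB hrG hN hEN hM hEM hb hg)

theorem rotPairs_eq_of_movesTo (hrB : ∀ b, Function.Injective (rB b))
    (hrG : ∀ g, Function.Injective (rG g)) (hρ : IsRotation rB rG ρ)
    (hρ' : IsRotation rB rG ρ') {b : B} {g : G} (h : MovesTo ρ b g) (h' : MovesTo ρ' b g) :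
    rotPairs ρ = rotPairs ρ' := by
  obtain ⟨M, hM, hEM⟩ := hρ
  obtain ⟨N, hN, hEN⟩ := hρ'
  obtain ⟨i, rfl, rfl⟩ := h
  obtain ⟨j, hb, hg⟩ := h'
  have hg' : ρ'.gs j = ρ.gs i := hrB _ <| le_antisymm
    (rB_gs_le_of_gs_succ_eq hrB hrG hM hEM hN hEN hb.symm hg.symm)
    (by rw [← hb]; exact rB_gs_le_of_gs_succ_eq hrB hrG hN hEN hM hEM hb hg)
  exact rotPairs_eq_of_movesFrom hrB hrG ⟨M, hM, hEM⟩ ⟨N, hN, hEN⟩ ⟨i, rfl, rfl⟩ ⟨j, hb, hg'⟩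

end IsRotation

end RotationUniqueness

namespace ElimChain

variable {L : List (Rotation B G)} {M M' : B ≃ G}

theorem rB_le (hrB : ∀ b, Function.Injective (rB b)) (hM : StableM rB rG M)
    (h : ElimChain rB rG M L M') (b : B) : rB b (M b) ≤ rB b (M' b) := by
  induction L generalizing M with
  | nil => exact ((h : M = M') ▸ le_rfl)
  | cons ρ L ih =>
    obtain ⟨N, hel, h⟩ := h
    exact (hel.rB_le hrB hM b).trans (ih (hel.stableM hM) h)

theorem rB_lt_of_movesFrom (hrB : ∀ b, Function.Injective (rB b)) (hM : StableM rB rG M)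
    (h : ElimChain rB rG M L M') {ρ : Rotation B G} (hρ : ρ ∈ L) {b : B} {g : G}
    (hmv : MovesFrom ρ b g) : rB b g < rB b (M' b) := by
  induction L generalizing M with
  | nil => simp at hρ
  | cons ρ₀ L ih =>
    obtain ⟨N, hel, h⟩ := h
    rcases List.mem_cons.1 hρ with rfl | hρ
    · exact (hel.rB_lt_of_movesFrom hrB hM hmv).trans_le (h.rB_le hrB (hel.stableM hM) b)
    · exact ih (hel.stableM hM) h hρ

theorem exists_movesFrom (hM : StableM rB rG M) (h : ElimChain rB rG M L M') {b : B} {g : G}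
    (hMb : M b = g) (hM'b : M' b ≠ g) : ∃ ρ ∈ L, IsRotation rB rG ρ ∧ MovesFrom ρ b g := by
  induction L generalizing M with
  | nil => exact absurd ((h : M = M') ▸ hMb) hM'b
  | cons ρ L ih =>
    obtain ⟨N, hel, h⟩ := h
    by_cases hNb : N b = g
    · obtain ⟨ρ', hρ', hrest⟩ := ih (hel.stableM hM) h hNb
      exact ⟨ρ', List.mem_cons_of_mem _ hρ', hrest⟩
    · exact ⟨ρ, List.mem_cons_self, ⟨M, hM, hel.1⟩, hel.movesFrom_of_apply_ne hMb hNb⟩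

theorem exists_movesTo (hM : StableM rB rG M) (h : ElimChain rB rG M L M') {b : B} {g : G}
    (hMb : M b ≠ g) (hM'b : M' b = g) : ∃ ρ ∈ L, IsRotation rB rG ρ ∧ MovesTo ρ b g := by
  induction L generalizing M with
  | nil => exact absurd ((h : M = M') ▸ hM'b) hMb
  | cons ρ L ih =>
    obtain ⟨N, hel, h⟩ := h
    by_cases hNb : N b = g
    · exact ⟨ρ, List.mem_cons_self, ⟨M, hM, hel.1⟩, hel.movesTo_of_apply_ne hMb hNb⟩
    · obtain ⟨ρ', hρ', hrest⟩ := ih (hel.stableM hM) h hNb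
      exact ⟨ρ', List.mem_cons_of_mem _ hρ', hrest⟩

theorem exists_movesFrom_of_movesTo (hM : StableM rB rG M) (h : ElimChain rB rG M L M')
    {ρ : Rotation B G} (hρ : ρ ∈ L) {b : B} {g : G} (hmv : MovesTo ρ b g) (hM'b : M' b ≠ g) :
    ∃ ρ' ∈ L, IsRotation rB rG ρ' ∧ MovesFrom ρ' b g := by
  induction L generalizing M with
  | nil => simp at hρ
  | cons ρ₀ L ih =>
    obtain ⟨N, hel, h⟩ := h
    have hsub : ∀ ρ' ∈ L, ρ' ∈ ρ₀ :: L := fun _ => List.mem_cons_of_mem _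
    rcases List.mem_cons.1 hρ with rfl | hρ
    · obtain ⟨ρ', hρ', hrest⟩ :=
        h.exists_movesFrom (hel.stableM hM) (hel.apply_of_movesTo hmv) hM'b
      exact ⟨ρ', hsub _ hρ', hrest⟩
    · obtain ⟨ρ', hρ', hrest⟩ := ih (hel.stableM hM) h hρ
      exact ⟨ρ', hsub _ hρ', hrest⟩

end ElimChain

namespace GirlOptimal

variable {Mz : B ≃ G}

theorem rB_le (hrG : ∀ g, Function.Injective (rG g)) (hMz : GirlOptimal rB rG Mz) {Q : B ≃ G}
    (hQ : StableM rB rG Q) (b : B) : rB b (Q b) ≤ rB b (Mz b) := by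
  refine not_lt.1 fun h => ?_
  have h₂ := hMz.2 Q hQ (Mz b)
  rw [Mz.symm_apply_apply] at h₂
  have hb : Q.symm (Mz b) = b := hrG _ (le_antisymm (hQ.rG_le_of_rB_lt h) h₂)
  rw [Q.symm_apply_eq.1 hb] at h
  exact lt_irrefl _ h

theorem not_movesFrom (hrB : ∀ b, Function.Injective (rB b))
    (hrG : ∀ g, Function.Injective (rG g)) (hMz : GirlOptimal rB rG Mz) {ρ : Rotation B G}
    (hρ : IsRotation rB rG ρ) (b : B) : ¬ MovesFrom ρ b (Mz b) := by
  intro hmv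
  obtain ⟨Q, hQ, hE⟩ := hρ
  obtain ⟨Q', hel⟩ := hE.exists_eliminates
  exact (hel.rB_lt_of_movesFrom hrB hQ hmv).not_ge (hMz.rB_le hrG (hel.stableM hQ) b)

end GirlOptimal

section GeneratedMatching

variable [Finite B] {ι : Type*} {rot : ι → Rotation B G} {L : List ι} {M₀ MC Mz : B ≃ G}
  {b : B} {g : G} {i j : ι}

theorem mem_of_mem_map_of_movesFrom (hrB : ∀ b, Function.Injective (rB b))
    (hrG : ∀ g, Function.Injective (rG g)) (hrot : ∀ i, IsRotation rB rG (rot i))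
    (hinj : ∀ i j, rotPairs (rot i) = rotPairs (rot j) → i = j) {ρ : Rotation B G}
    (hρL : ρ ∈ L.map rot) (hρ : IsRotation rB rG ρ) (hmv : MovesFrom ρ b g)
    (hi : MovesFrom (rot i) b g) : i ∈ L := by
  obtain ⟨k, hk, rfl⟩ := List.mem_map.1 hρL
  exact hinj k i (hρ.rotPairs_eq_of_movesFrom hrB hrG (hrot i) hmv hi) ▸ hk

theorem mem_of_apply_eq_of_movesTo (hrB : ∀ b, Function.Injective (rB b))
    (hrG : ∀ g, Function.Injective (rG g)) (hrot : ∀ i, IsRotation rB rG (rot i))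
    (hinj : ∀ i j, rotPairs (rot i) = rotPairs (rot j) → i = j) (hM₀ : StableM rB rG M₀)
    (hL : ElimChain rB rG M₀ (L.map rot) MC) (hM₀b : M₀ b ≠ g) (hi : MovesTo (rot i) b g)
    (hMC : MC b = g) : i ∈ L := by
  obtain ⟨ρ, hρL, hρ, hmv⟩ := hL.exists_movesTo hM₀ hM₀b hMC
  obtain ⟨k, hk, rfl⟩ := List.mem_map.1 hρL
  exact hinj k i (hρ.rotPairs_eq_of_movesTo hrB hrG (hrot i) hmv hi) ▸ hk

theorem apply_eq_iff_notMem_of_movesFrom (hrB : ∀ b, Function.Injective (rB b))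
    (hrG : ∀ g, Function.Injective (rG g)) (hrot : ∀ i, IsRotation rB rG (rot i))
    (hinj : ∀ i j, rotPairs (rot i) = rotPairs (rot j) → i = j) (hM₀ : StableM rB rG M₀)
    (hL : ElimChain rB rG M₀ (L.map rot) MC) (hM₀b : M₀ b = g) (hi : MovesFrom (rot i) b g) :
    MC b = g ↔ i ∉ L := by
  refine ⟨fun hMC hiL => ?_, fun hiL => ?_⟩
  · exact (hL.rB_lt_of_movesFrom hrB hM₀ (List.mem_map_of_mem hiL) hi).ne' (congrArg _ hMC)
  · by_contra hMC
    obtain ⟨ρ, hρL, hρ, hmv⟩ := hL.exists_movesFrom hM₀ hM₀b hMC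
    exact hiL (mem_of_mem_map_of_movesFrom hrB hrG hrot hinj hρL hρ hmv hi)

theorem apply_eq_iff_mem_of_movesTo (hrB : ∀ b, Function.Injective (rB b))
    (hrG : ∀ g, Function.Injective (rG g)) (hrot : ∀ i, IsRotation rB rG (rot i))
    (hinj : ∀ i j, rotPairs (rot i) = rotPairs (rot j) → i = j) (hM₀ : StableM rB rG M₀)
    (hMz : GirlOptimal rB rG Mz) (hL : ElimChain rB rG M₀ (L.map rot) MC) (hM₀b : M₀ b ≠ g)
    (hMzb : Mz b = g) (hi : MovesTo (rot i) b g) : MC b = g ↔ i ∈ L := by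
  refine ⟨mem_of_apply_eq_of_movesTo hrB hrG hrot hinj hM₀ hL hM₀b hi, fun hiL => ?_⟩
  by_contra hMC
  obtain ⟨ρ, -, hρ, hmv⟩ :=
    hL.exists_movesFrom_of_movesTo hM₀ (List.mem_map_of_mem hiL) hi hMC
  exact hMz.not_movesFrom hrB hrG hρ b (hMzb ▸ hmv)

theorem apply_eq_iff_of_movesTo_of_movesFrom (hrB : ∀ b, Function.Injective (rB b))
    (hrG : ∀ g, Function.Injective (rG g)) (hrot : ∀ i, IsRotation rB rG (rot i))
    (hinj : ∀ i j, rotPairs (rot i) = rotPairs (rot j) → i = j) (hM₀ : StableM rB rG M₀)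
    (hL : ElimChain rB rG M₀ (L.map rot) MC) (hM₀b : M₀ b ≠ g) (hi : MovesTo (rot i) b g)
    (hj : MovesFrom (rot j) b g) : MC b = g ↔ i ∈ L ∧ j ∉ L := by
  refine ⟨fun hMC => ⟨mem_of_apply_eq_of_movesTo hrB hrG hrot hinj hM₀ hL hM₀b hi hMC,
    fun hjL => ?_⟩, fun ⟨hiL, hjL⟩ => ?_⟩
  · exact (hL.rB_lt_of_movesFrom hrB hM₀ (List.mem_map_of_mem hjL) hj).ne' (congrArg _ hMC)
  · by_contra hMC
    obtain ⟨ρ, hρL, hρ, hmv⟩ :=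
      hL.exists_movesFrom_of_movesTo hM₀ (List.mem_map_of_mem hiL) hi hMC
    exact hjL (mem_of_mem_map_of_movesFrom hrB hrG hrot hinj hρL hρ hmv hj)

end GeneratedMatching

end RotationTheory

theorem Vtx.mem_cut_of_edge {ι : Type*} {E : Vtx ι → Vtx ι → Prop} {C : Set ι}
    (hsrc : ∀ v, ¬ E v Vtx.src) (hsnk : ∀ v, ¬ E Vtx.snk v)
    (hC : ∀ i ∈ C, ∀ j, E (Vtx.node j) (Vtx.node i) → j ∈ C) {x y : Vtx ι} (hxy : E x y)
    (hy : y ∈ insert Vtx.src (Vtx.node '' C)) : x ∈ insert Vtx.src (Vtx.node '' C) := by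
  rcases hy with rfl | ⟨i, hi, rfl⟩
  · exact absurd hxy (hsrc x)
  · cases x with
    | src => exact Set.mem_insert _ _
    | snk => exact absurd hxy (hsnk _)
    | node j => exact Or.inr ⟨j, hC i hi j hxy, rfl⟩

section Paths

variable {W : Type*} {R : W → W → Prop} {S : Set W}

theorem cutsPath_cons_cons {a b : W} {l : List W} :
    CutsPath S (a :: b :: l) ↔ (a ∈ S ∧ b ∉ S) ∨ CutsPath S (b :: l) := by
  simp [CutsPath]

theorem mem_of_isChain_of_getLast_mem (hS : ∀ x y, R x y → y ∈ S → x ∈ S) {P : List W}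
    (hP : P.IsChain R) {v : W} (hv : P.getLast? = some v) (hvS : v ∈ S) : ∀ x ∈ P, x ∈ S :=
  hP.backwards_induction (· ∈ S) P hS fun hne =>
    Option.some_inj.1 ((List.getLast?_eq_some_getLast hne).symm.trans hv) ▸ hvS

theorem cutsPath_iff_of_isChain (hS : ∀ x y, R x y → y ∈ S → x ∈ S) {P : List W}
    (hP : P.IsChain R) {u v : W} (hu : P.head? = some u) (hv : P.getLast? = some v) :
    CutsPath S P ↔ u ∈ S ∧ v ∉ S := by
  induction P generalizing u with
  | nil => simp at hu
  | cons a l ih =>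
    obtain rfl : a = u := by simpa using hu
    rcases l with _ | ⟨b, t⟩
    · obtain rfl : a = v := by simpa using hv
      simp [CutsPath]
    · have hv' : (b :: t).getLast? = some v := by simpa using hv
      have hab : b ∈ S → a ∈ S := hS a b (List.isChain_cons_cons.1 hP).1
      have hbv : b ∉ S → v ∉ S := fun hb hvS =>
        hb (mem_of_isChain_of_getLast_mem hS hP.tail hv' hvS b List.mem_cons_self)
      rw [cutsPath_cons_cons, ih hP.tail rfl hv']
      tauto

end Paths

theorem cut_iff_pair_matched_general {B G ι : Type*} [Fintype B]
    (rB : B → G → ℕ) (rG : G → B → ℕ)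
    (hrB : ∀ b, Function.Injective (rB b)) (hrG : ∀ g, Function.Injective (rG g))
    (rot : ι → Rotation B G) (hrot : ∀ i, IsRotation rB rG (rot i))
    (hinj : ∀ i j, rotPairs (rot i) = rotPairs (rot j) → i = j)
    (Egr : Vtx ι → Vtx ι → Prop)
    (hEprec : ∀ i j, Egr (Vtx.node i) (Vtx.node j) → Precedes rB rG (rot i) (rot j))
    (hsrc : ∀ v, ¬ Egr v Vtx.src) (hsnk : ∀ v, ¬ Egr Vtx.snk v)
    (M₀ Mz : B ≃ G) (hM₀ : BoyOptimal rB rG M₀) (hMz : GirlOptimal rB rG Mz)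
    (C : Set ι) (hC : ∀ i ∈ C, ∀ j, Precedes rB rG (rot j) (rot i) → j ∈ C)
    (MC : B ≃ G) (hMC : GeneratedBy rB rG M₀ rot C MC)
    (b : B) (g : G)
    (P : List (Vtx ι)) (hchain : P.Chain' Egr)
    (hspec : PathSpec M₀ Mz rot b g P) :
    CutsPath (insert Vtx.src (Vtx.node '' C)) P ↔ MC b = g := by
  obtain ⟨L, hLC, hL⟩ := hMC
  have hcut : ∀ x y, Egr x y → y ∈ insert Vtx.src (Vtx.node '' C) →
      x ∈ insert Vtx.src (Vtx.node '' C) := fun _ _ =>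
    Vtx.mem_cut_of_edge hsrc hsnk fun i hi j hji => hC i hi j (hEprec j i hji)
  rcases hspec with ⟨hM₀b, -, i, hi, hhead, hlast⟩ | ⟨hM₀b, hMzb, i, hi, hhead, hlast⟩ |
      ⟨hM₀b, -, i, j, hi, hj, hhead, hlast⟩
  · rw [cutsPath_iff_of_isChain hcut hchain hhead hlast,
      apply_eq_iff_notMem_of_movesFrom hrB hrG hrot hinj hM₀.1 hL hM₀b hi]
    simp [hLC]
  · rw [cutsPath_iff_of_isChain hcut hchain hhead hlast,
      apply_eq_iff_mem_of_movesTo hrB hrG hrot hinj hM₀.1 hMz hL hM₀b hMzb hi]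
    simp [hLC]
  · rw [cutsPath_iff_of_isChain hcut hchain hhead hlast,
      apply_eq_iff_of_movesTo_of_movesFrom hrB hrG hrot hinj hM₀.1 hL hM₀b hi hj]
    simp [hLC]

/-- Let `C` be a closed subset of the rotation poset and `S = {src} ∪ {node i : i ∈ C}`
the corresponding ideal cut side in the augmented DAG `G` (edge relation `Egr`,
respecting the precedence order, with source before all rotations and sink after all).
For a pair `bg` not in every stable matching, with associated path `P = P_{bg}`:
`S` cuts `P` iff the stable matching generated by `C` contains the pair `bg`. -/
theorem cut_iff_pair_matched {B G ι : Type*} [Fintype B] [Fintype G]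
    [DecidableEq B] [DecidableEq G] [DecidableEq ι]
    (rB : B → G → ℕ) (rG : G → B → ℕ)
    (hrB : ∀ b, Function.Injective (rB b)) (hrG : ∀ g, Function.Injective (rG g))
    (rot : ι → Rotation B G) (hrot : ∀ i, IsRotation rB rG (rot i))
    (hinj : ∀ i j, rotPairs (rot i) = rotPairs (rot j) → i = j)
    (Egr : Vtx ι → Vtx ι → Prop)
    (hEprec : ∀ i j, Egr (Vtx.node i) (Vtx.node j) → Precedes rB rG (rot i) (rot j))
    (hsrc : ∀ v, ¬ Egr v Vtx.src) (hsnk : ∀ v, ¬ Egr Vtx.snk v)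
    (M₀ Mz : B ≃ G) (hM₀ : BoyOptimal rB rG M₀) (hMz : GirlOptimal rB rG Mz)
    (C : Set ι) (hC : ∀ i ∈ C, ∀ j, Precedes rB rG (rot j) (rot i) → j ∈ C)
    (MC : B ≃ G) (hMC : GeneratedBy rB rG M₀ rot C MC)
    (b : B) (g : G)
    (P : List (Vtx ι)) (hchain : P.Chain' Egr)
    (hspec : PathSpec M₀ Mz rot b g P) :
    CutsPath (insert Vtx.src (Vtx.node '' C)) P ↔ MC b = g :=
  cut_iff_pair_matched_general rB rG hrB hrG rot hrot hinj Egr hEprec hsrc hsnk M₀ Mz hM₀ hMz C hC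
    MC hMC b g P hchain hspec
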